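/- If V = aξ is a potential vector field of a *-Ricci soliton on a Kenmotsu manifold, where a is a smooth function, then da(X) + da(ξ)η(X) = 0 for all vector fields X, and consequently a is constant. -/

import Mathlib

/-- An abstract algebraic model of a `(2n+1)`-dimensional Kenmotsu manifold:
`C` plays the role of the ring of smooth functions on the manifold and vector
fields are modelled as `ℝ`-derivations of `C`.  A global orthonormal frame `e`
is included in order to express traces (Ricci tensor, scalar curvature). -/
structure KenmotsuManifold (n : ℕ) (C : Type*) [CommRing C] [Algebra ℝ C] where
  /-- the Riemannian metric -/
  g : Derivation ℝ C C → Derivation ℝ C C → C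
  /-- the structure `(1,1)`-tensor field -/
  φ : Derivation ℝ C C → Derivation ℝ C C
  /-- the Reeb (characteristic) vector field -/
  ξ : Derivation ℝ C C
  /-- the contact `1`-form -/
  η : Derivation ℝ C C → C
  /-- the Levi-Civita connection -/
  nabla : Derivation ℝ C C → Derivation ℝ C C → Derivation ℝ C C
  /-- a global orthonormal frame, used to take traces -/
  e : Fin (2 * n + 1) → Derivation ℝ C C
  g_symm : ∀ X Y, g X Y = g Y X
  g_add_left : ∀ X Y Z, g (X + Y) Z = g X Z + g Y Z
  g_smul_left : ∀ (f : C) (X Y), g (f • X) Y = f * g X Y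
  g_nondeg : ∀ X, (∀ Y, g X Y = 0) → X = 0
  g_frame : ∀ i j, g (e i) (e j) = if i = j then 1 else 0
  frame_span : ∀ X : Derivation ℝ C C, X = ∑ i, g X (e i) • e i
  phi_phi : ∀ X, φ (φ X) = -X + η X • ξ
  phi_linear : ∀ (f : C) (X Y), φ (f • X + Y) = f • φ X + φ Y
  eta_xi : η ξ = 1
  eta_def : ∀ X, η X = g X ξ
  compat_phi : ∀ X Y, g (φ X) (φ Y) = g X Y - η X * η Y
  nabla_add_left : ∀ X Y Z, nabla (X + Y) Z = nabla X Z + nabla Y Z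
  nabla_smul_left : ∀ (f : C) (X Y), nabla (f • X) Y = f • nabla X Y
  nabla_add_right : ∀ X Y Z, nabla X (Y + Z) = nabla X Y + nabla X Z
  nabla_leibniz : ∀ (X) (f : C) (Y), nabla X (f • Y) = X f • Y + f • nabla X Y
  torsion_free : ∀ X Y, nabla X Y - nabla Y X = ⁅X, Y⁆
  metric_compat : ∀ X Y Z, X (g Y Z) = g (nabla X Y) Z + g Y (nabla X Z)
  /-- the Kenmotsu condition `(∇_X φ)Y = g(φX,Y)ξ - η(Y)φX` -/
  kenmotsu : ∀ X Y, nabla X (φ Y) - φ (nabla X Y) = g (φ X) Y • ξ - η Y • φ X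

namespace KenmotsuManifold

variable {n : ℕ} {C : Type*} [CommRing C] [Algebra ℝ C] (K : KenmotsuManifold n C)

/-- the Riemann curvature tensor `R(X,Y)Z = ∇_X∇_Y Z - ∇_Y∇_X Z - ∇_{[X,Y]}Z` -/
def Rm (X Y Z : Derivation ℝ C C) : Derivation ℝ C C :=
  K.nabla X (K.nabla Y Z) - K.nabla Y (K.nabla X Z) - K.nabla ⁅X, Y⁆ Z

/-- the Ricci tensor `S(X,Y) = trace (Z ↦ R(Z,X)Y)` -/
def S (X Y : Derivation ℝ C C) : C := ∑ i, K.g (K.Rm (K.e i) X Y) (K.e i)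

/-- the Ricci operator `Q`, `g(QX,Y) = S(X,Y)` -/
def Q (X : Derivation ℝ C C) : Derivation ℝ C C := ∑ i, K.S X (K.e i) • K.e i

/-- the scalar curvature `r` -/
def r : C := ∑ i, K.S (K.e i) (K.e i)

/-- the `*`-Ricci tensor `S*(X,Y) = (1/2) trace (Z ↦ R(X,φY)φZ)` -/
noncomputable def Sstar (X Y : Derivation ℝ C C) : C :=
  (2 : ℝ)⁻¹ • ∑ i, K.g (K.Rm X (K.φ Y) (K.φ (K.e i))) (K.e i)

/-- the covariant derivative `(∇_X Q)Y` of the Ricci operator -/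
def nablaQ (X Y : Derivation ℝ C C) : Derivation ℝ C C :=
  K.nabla X (K.Q Y) - K.Q (K.nabla X Y)

/-- the Lie derivative `(£_V g)(X,Y)` of the metric -/
def lieG (V X Y : Derivation ℝ C C) : C :=
  V (K.g X Y) - K.g ⁅V, X⁆ Y - K.g X ⁅V, Y⁆

/-- the Lie derivative `(£_V S)(X,Y)` of the Ricci tensor -/
def lieS (V X Y : Derivation ℝ C C) : C :=
  V (K.S X Y) - K.S ⁅V, X⁆ Y - K.S X ⁅V, Y⁆

/-- `g` is a `*`-Ricci soliton with potential vector field `V` and soliton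
constant `l`: `£_V g + 2S* + 2l g = 0`. -/
def IsStarRicciSoliton (V : Derivation ℝ C C) (l : ℝ) : Prop :=
  ∀ X Y, K.lieG V X Y + 2 * K.Sstar X Y + (2 * l) • K.g X Y = 0

/-- `g` is a gradient almost `*`-Ricci soliton with potential function `f`
(with gradient `F`, i.e. `g(F,X) = Xf`) and soliton function `l`:
`Hess f + S* + l g = 0`. -/
def IsGradAlmostStarRicciSoliton (f : C) (F : Derivation ℝ C C) (l : C) : Prop :=
  (∀ X, K.g F X = X f) ∧ ∀ X Y, K.g (K.nabla X F) Y + K.Sstar X Y + l * K.g X Y = 0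

/-- `M` is `η`-Einstein: `S = α g + β η⊗η`. -/
def IsEtaEinstein : Prop :=
  ∃ α β : C, ∀ X Y, K.S X Y = α * K.g X Y + β * (K.η X * K.η Y)

lemma half_cancel {x : C} (h : x + x = 0) : x = 0 := by
  have h2 : ((1:ℝ)/2) • (x + x) = x := by rw [smul_add, ← add_smul]; norm_num
  rw [h, smul_zero] at h2; exact h2.symm

lemma g_add_right (X Y Z : Derivation ℝ C C) : K.g X (Y + Z) = K.g X Y + K.g X Z := by
  rw [K.g_symm, K.g_add_left, K.g_symm Y, K.g_symm Z]

lemma g_smul_right (f : C) (X Y : Derivation ℝ C C) : K.g X (f • Y) = f * K.g X Y := by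
  rw [K.g_symm, K.g_smul_left, K.g_symm]

lemma g_zero_left (Y : Derivation ℝ C C) : K.g 0 Y = 0 := by
  have := K.g_add_left 0 0 Y; simp at this; exact this

lemma g_zero_right (X : Derivation ℝ C C) : K.g X 0 = 0 := by
  rw [K.g_symm]; exact K.g_zero_left X

lemma g_neg_left (X Y : Derivation ℝ C C) : K.g (-X) Y = -K.g X Y := by
  have h := K.g_add_left X (-X) Y
  simp [K.g_zero_left] at h
  linear_combination -h

lemma g_sub_left (X Y Z : Derivation ℝ C C) : K.g (X - Y) Z = K.g X Z - K.g Y Z := by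
  rw [sub_eq_add_neg, K.g_add_left, K.g_neg_left, sub_eq_add_neg]

lemma g_sub_right (X Y Z : Derivation ℝ C C) : K.g X (Y - Z) = K.g X Y - K.g X Z := by
  rw [K.g_symm, K.g_sub_left, K.g_symm Y, K.g_symm Z]

lemma g_sum_left {ι : Type*} (s : Finset ι) (F : ι → Derivation ℝ C C) (Y : Derivation ℝ C C) :
    K.g (∑ i ∈ s, F i) Y = ∑ i ∈ s, K.g (F i) Y := by
  classical
  induction s using Finset.induction with
  | empty => simp [K.g_zero_left]
  | insert _ _ h ih => simp [Finset.sum_insert h, K.g_add_left, ih]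

lemma g_xi (Y : Derivation ℝ C C) : K.g K.ξ Y = K.η Y := by
  rw [K.g_symm, ← K.eta_def]

lemma g_xi_xi : K.g K.ξ K.ξ = 1 := by rw [K.g_xi, K.eta_xi]

lemma eta_add (X Y : Derivation ℝ C C) : K.η (X + Y) = K.η X + K.η Y := by
  rw [K.eta_def, K.g_add_left, K.eta_def, K.eta_def]

lemma eta_smul (f : C) (X : Derivation ℝ C C) : K.η (f • X) = f * K.η X := by
  rw [K.eta_def, K.g_smul_left, K.eta_def]

lemma eta_sub (X Y : Derivation ℝ C C) : K.η (X - Y) = K.η X - K.η Y := by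
  rw [K.eta_def, K.g_sub_left, K.eta_def, K.eta_def]

lemma eta_neg (X : Derivation ℝ C C) : K.η (-X) = -K.η X := by
  rw [K.eta_def, K.g_neg_left, K.eta_def]

lemma phi_zero : K.φ 0 = 0 := by
  have h := K.phi_linear 1 0 0
  simp at h
  exact h

lemma phi_smul (f : C) (X : Derivation ℝ C C) : K.φ (f • X) = f • K.φ X := by
  have h := K.phi_linear f X 0
  simpa [K.phi_zero] using h

lemma phi_add (X Y : Derivation ℝ C C) : K.φ (X + Y) = K.φ X + K.φ Y := by
  have h := K.phi_linear 1 X Y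
  simpa using h

lemma phi_neg (X : Derivation ℝ C C) : K.φ (-X) = -K.φ X := by
  have h := K.phi_smul (-1) X
  simpa using h

lemma phi_sub (X Y : Derivation ℝ C C) : K.φ (X - Y) = K.φ X - K.φ Y := by
  rw [sub_eq_add_neg, K.phi_add, K.phi_neg, sub_eq_add_neg]

lemma phi_sum {ι : Type*} (s : Finset ι) (F : ι → Derivation ℝ C C) :
    K.φ (∑ i ∈ s, F i) = ∑ i ∈ s, K.φ (F i) := by
  classical
  induction s using Finset.induction with
  | empty => simp [K.phi_zero]
  | insert _ _ h ih => simp [Finset.sum_insert h, K.phi_add, ih]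

lemma nabla_zero_right (X : Derivation ℝ C C) : K.nabla X 0 = 0 := by
  have := K.nabla_add_right X 0 0; simp at this; exact this

lemma nabla_neg_right (X Y : Derivation ℝ C C) : K.nabla X (-Y) = -K.nabla X Y := by
  have h := K.nabla_add_right X Y (-Y)
  simp [K.nabla_zero_right] at h
  exact (neg_eq_of_add_eq_zero_right h.symm).symm

lemma nabla_sub_right (X Y Z : Derivation ℝ C C) :
    K.nabla X (Y - Z) = K.nabla X Y - K.nabla X Z := by
  rw [sub_eq_add_neg, K.nabla_add_right, K.nabla_neg_right, sub_eq_add_neg]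


/-- `c = η(φξ)`, the anomaly scalar (zero in genuine Kenmotsu geometry). -/
def cc : C := K.η (K.φ K.ξ)

lemma phi_phi_xi : K.φ (K.φ K.ξ) = 0 := by
  rw [K.phi_phi, K.eta_xi, one_smul]; abel

lemma g_phi_xi (Y : Derivation ℝ C C) : K.g Y (K.φ K.ξ) = K.η Y * K.cc := by
  have hY : Y = K.η Y • K.ξ - K.φ (K.φ Y) := by
    rw [K.phi_phi]; abel
  calc K.g Y (K.φ K.ξ) = K.g (K.η Y • K.ξ - K.φ (K.φ Y)) (K.φ K.ξ) := by rw [← hY]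
    _ = K.η Y * K.g K.ξ (K.φ K.ξ) - K.g (K.φ (K.φ Y)) (K.φ K.ξ) := by
        rw [K.g_sub_left, K.g_smul_left]
    _ = K.η Y * K.cc := by
        rw [K.compat_phi, K.eta_def (K.φ Y), K.g_symm (K.φ Y) K.ξ, K.eta_xi]
        simp [cc, K.eta_def, K.g_symm]

lemma phi_xi : K.φ K.ξ = K.cc • K.ξ := by
  have h : ∀ Y, K.g (K.φ K.ξ - K.cc • K.ξ) Y = 0 := by
    intro Y
    rw [K.g_sub_left, K.g_smul_left, K.g_symm (K.φ K.ξ) Y, K.g_phi_xi, K.g_xi]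
    ring
  have := K.g_nondeg _ h
  linear_combination (norm := abel) this

lemma cc_sq : K.cc * K.cc = 0 := by
  have h := K.compat_phi K.ξ K.ξ
  rw [K.phi_xi, K.g_smul_left, K.g_smul_right, K.g_xi_xi, K.eta_xi] at h
  linear_combination h

/-- skew identity: `g(φX,Y) + g(X,φY) = η(X)η(φY) + η(φX)η(Y)` -/
lemma skew (X Y : Derivation ℝ C C) :
    K.g (K.φ X) Y + K.g X (K.φ Y) = K.η X * K.η (K.φ Y) + K.η (K.φ X) * K.η Y := by
  have h := K.compat_phi (K.φ X) Y
  rw [K.phi_phi, K.g_add_left, K.g_neg_left, K.g_smul_left, K.g_xi] at h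
  linear_combination -h

lemma tau_phi (X : Derivation ℝ C C) : K.η (K.φ (K.φ X)) = 0 := by
  rw [K.phi_phi, K.eta_add, K.eta_neg, K.eta_smul, K.eta_xi]; ring

lemma eta_nabla_xi (X : Derivation ℝ C C) : K.η (K.nabla X K.ξ) = 0 := by
  have h := K.metric_compat X K.ξ K.ξ
  rw [K.g_xi_xi, Derivation.map_one_eq_zero] at h
  rw [K.eta_def]
  apply half_cancel
  rw [K.g_symm K.ξ (K.nabla X K.ξ)] at h
  linear_combination -h


lemma key1 (X : Derivation ℝ C C) :
    K.φ (K.nabla X K.ξ) =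
      (X K.cc) • K.ξ + K.cc • K.nabla X K.ξ - (K.η (K.φ X)) • K.ξ + K.φ X := by
  have h := K.kenmotsu X K.ξ
  rw [K.eta_xi, one_smul, ← K.eta_def (K.φ X), K.phi_xi, K.nabla_leibniz] at h
  linear_combination (norm := abel) -h

lemma nabla_xi_aux (X : Derivation ℝ C C) :
    K.nabla X K.ξ = X - K.η X • K.ξ
      + (2 * (K.cc * K.η (K.φ X)) - 2 * (K.cc * X K.cc)) • K.ξ - K.cc • K.φ X := by
  have hpp := K.phi_phi (K.nabla X K.ξ)
  rw [K.eta_nabla_xi, zero_smul, add_zero] at hpp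
  have h3 : K.φ (K.φ (K.nabla X K.ξ)) =
      (X K.cc) • (K.cc • K.ξ)
      + K.cc • ((X K.cc) • K.ξ + K.cc • K.nabla X K.ξ - (K.η (K.φ X)) • K.ξ + K.φ X)
      - (K.η (K.φ X)) • (K.cc • K.ξ) + (-X + K.η X • K.ξ) := by
    rw [key1, K.phi_add, K.phi_sub, K.phi_add, K.phi_smul, K.phi_smul, K.phi_smul,
      K.phi_xi, K.phi_phi, key1]
  have h4 : K.nabla X K.ξ = -((X K.cc) • (K.cc • K.ξ)
      + K.cc • ((X K.cc) • K.ξ + K.cc • K.nabla X K.ξ - (K.η (K.φ X)) • K.ξ + K.φ X)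
      - (K.η (K.φ X)) • (K.cc • K.ξ) + (-X + K.η X • K.ξ)) := by
    rw [← h3, hpp, neg_neg]
  rw [h4]
  have hc2 : K.cc ^ 2 = 0 := by rw [pow_two]; exact K.cc_sq
  match_scalars <;> (ring_nf; try simp [hc2])

lemma tau_eq (X : Derivation ℝ C C) : K.η (K.φ X) = X K.cc + K.cc * K.η X := by
  have hA : K.φ (K.nabla X K.ξ) =
      K.φ X - K.η X • (K.cc • K.ξ)
        + (2 * (K.cc * K.η (K.φ X)) - 2 * (K.cc * X K.cc)) • (K.cc • K.ξ)
        - K.cc • (-X + K.η X • K.ξ) := by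
    calc K.φ (K.nabla X K.ξ)
        = K.φ (X - K.η X • K.ξ
            + (2 * (K.cc * K.η (K.φ X)) - 2 * (K.cc * X K.cc)) • K.ξ - K.cc • K.φ X) := by
          rw [← K.nabla_xi_aux]
      _ = _ := by
          rw [K.phi_sub, K.phi_add, K.phi_sub, K.phi_smul, K.phi_smul, K.phi_smul,
            K.phi_xi, K.phi_phi]
  have hB := K.key1 X
  have hAB := hA.symm.trans hB
  have h := congrArg K.η hAB
  simp only [K.eta_sub, K.eta_add, K.eta_smul, K.eta_neg, K.eta_xi, K.eta_nabla_xi] at h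
  linear_combination h + (2 * X K.cc - 2 * K.η (K.φ X)) * K.cc_sq


lemma cc_Xcc (X : Derivation ℝ C C) : K.cc * X K.cc = 0 := by
  have h0 := K.eta_nabla_xi X
  rw [K.nabla_xi_aux] at h0
  simp only [K.eta_sub, K.eta_add, K.eta_smul, K.eta_xi] at h0
  linear_combination -h0 + K.cc * (K.tau_eq X) + (K.η X) * K.cc_sq

lemma cc_tau (X : Derivation ℝ C C) : K.cc * K.η (K.φ X) = 0 := by
  linear_combination K.cc * (K.tau_eq X) + K.cc_Xcc X + (K.η X) * K.cc_sq

lemma nabla_xi (X : Derivation ℝ C C) :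
    K.nabla X K.ξ = X - K.η X • K.ξ - K.cc • K.φ X := by
  rw [K.nabla_xi_aux]
  have h1 := K.cc_tau X
  have h2 := K.cc_Xcc X
  match_scalars
  · ring
  · linear_combination 2 * h1 - 2 * h2
  · ring

lemma phiX_cc (X : Derivation ℝ C C) : (K.φ X) K.cc = 0 := by
  have h := K.tau_eq (K.φ X)
  rw [K.tau_phi] at h
  linear_combination h.symm - K.cc_tau X

lemma nabla_xi_xi : K.nabla K.ξ K.ξ = 0 := by
  rw [K.nabla_xi, K.eta_xi, K.phi_xi]
  have hc2 : K.cc ^ 2 = 0 := by rw [pow_two]; exact K.cc_sq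
  match_scalars <;> (ring_nf; try simp [hc2])

lemma deriv_eta (Z X : Derivation ℝ C C) :
    Z (K.η X) = K.η (K.nabla Z X) + K.g X Z - K.η X * K.η Z - K.cc * K.g X (K.φ Z) := by
  have h := K.metric_compat Z X K.ξ
  rw [K.nabla_xi Z, K.g_sub_right, K.g_sub_right, K.g_smul_right, K.g_smul_right] at h
  rw [K.eta_def X, h, ← K.eta_def X, K.eta_def (K.nabla Z X)]
  ring

lemma kenmotsu' (Z X : Derivation ℝ C C) :
    K.nabla Z (K.φ X) = K.φ (K.nabla Z X) + K.g (K.φ Z) X • K.ξ - K.η X • K.φ Z := by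
  have h := K.kenmotsu Z X
  linear_combination (norm := abel) h

lemma Rm_xi (Z X : Derivation ℝ C C) :
    K.Rm Z X K.ξ = K.η Z • X - K.η X • Z
      + (2 * (K.cc * K.η X) + X K.cc) • K.φ Z
      - (2 * (K.cc * K.η Z) + Z K.cc) • K.φ X := by
  rw [Rm]
  simp only [K.nabla_xi]
  rw [K.nabla_sub_right, K.nabla_sub_right, K.nabla_sub_right, K.nabla_sub_right,
    K.nabla_leibniz, K.nabla_leibniz, K.nabla_leibniz, K.nabla_leibniz,
    K.kenmotsu' Z X, K.kenmotsu' X Z]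
  rw [show ⁅Z, X⁆ = K.nabla Z X - K.nabla X Z from (K.torsion_free Z X).symm]
  rw [K.eta_sub, K.phi_sub, K.deriv_eta Z X, K.deriv_eta X Z]
  simp only [K.nabla_xi]
  rw [K.g_symm (K.φ Z) X, K.g_symm (K.φ X) Z, K.g_symm Z X]
  match_scalars <;> ring


lemma g_sum_right {ι : Type*} (s : Finset ι) (X : Derivation ℝ C C) (F : ι → Derivation ℝ C C) :
    K.g X (∑ i ∈ s, F i) = ∑ i ∈ s, K.g X (F i) := by
  rw [K.g_symm, K.g_sum_left]
  exact Finset.sum_congr rfl fun i _ => K.g_symm _ _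

lemma eta_zero : K.η 0 = 0 := by rw [K.eta_def, K.g_zero_left]

lemma eta_sum {ι : Type*} (s : Finset ι) (F : ι → Derivation ℝ C C) :
    K.η (∑ i ∈ s, F i) = ∑ i ∈ s, K.η (F i) := by
  rw [K.eta_def, K.g_sum_left]
  exact Finset.sum_congr rfl fun i _ => (K.eta_def _).symm

lemma xi_span : K.ξ = ∑ i, K.η (K.e i) • K.e i := by
  conv_lhs => rw [K.frame_span K.ξ]
  exact Finset.sum_congr rfl fun i _ => by rw [K.g_xi]

lemma sum_eta_g (X : Derivation ℝ C C) :
    ∑ i, K.η (K.e i) * K.g X (K.e i) = K.η X := by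
  conv_rhs => rw [K.eta_def, ← K.g_symm K.ξ X, K.xi_span, K.g_sum_left]
  exact Finset.sum_congr rfl fun i _ => by rw [K.g_smul_left, K.g_symm (K.e i) X]

lemma deriv_sum_apply {ι : Type*} (s : Finset ι) (F : ι → Derivation ℝ C C) (f : C) :
    (∑ i ∈ s, F i) f = ∑ i ∈ s, (F i) f := by
  classical
  induction s using Finset.induction with
  | empty => simp
  | insert _ _ h ih => simp [Finset.sum_insert h, ih]

lemma sum_frame_apply (X : Derivation ℝ C C) (f : C) :
    ∑ i, K.g X (K.e i) * (K.e i) f = X f := by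
  conv_rhs => rw [K.frame_span X]
  rw [deriv_sum_apply]
  exact (Finset.sum_congr rfl fun i _ => by simp [smul_eq_mul]).symm

lemma trace_phi : ∑ i, K.g (K.φ (K.e i)) (K.e i) = K.cc := by
  have h1 : ∀ i, K.g (K.φ (K.e i)) (K.e i) = K.η (K.e i) * K.η (K.φ (K.e i)) := by
    intro i
    have hs := K.skew (K.e i) (K.e i)
    rw [K.g_symm (K.e i) (K.φ (K.e i))] at hs
    have h := half_cancel (x := K.g (K.φ (K.e i)) (K.e i) - K.η (K.e i) * K.η (K.φ (K.e i)))
      (by linear_combination hs)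
    linear_combination h
  rw [Finset.sum_congr rfl fun i _ => h1 i]
  have h2 : K.φ K.ξ = ∑ i, K.η (K.e i) • K.φ (K.e i) := by
    conv_lhs => rw [K.xi_span]
    rw [K.phi_sum]
    exact Finset.sum_congr rfl fun i _ => K.phi_smul _ _
  have h3 := congrArg K.η h2
  rw [K.eta_sum] at h3
  rw [cc, h3]
  exact Finset.sum_congr rfl fun i _ => by rw [K.eta_smul]

lemma S_xi (X : Derivation ℝ C C) : K.S X K.ξ = -(((2*n : ℕ) : C)) * K.η X := by
  have hsum : K.S X K.ξ =
      (∑ i, K.η (K.e i) * K.g X (K.e i))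
      - K.η X * (∑ i, K.g (K.e i) (K.e i))
      + (2*(K.cc*K.η X) + X K.cc) * (∑ i, K.g (K.φ (K.e i)) (K.e i))
      - 2*K.cc*(∑ i, K.η (K.e i) * K.g (K.φ X) (K.e i))
      - (∑ i, K.g (K.φ X) (K.e i) * (K.e i) K.cc) := by
    rw [S]
    have hper : ∀ i ∈ (Finset.univ : Finset (Fin (2*n+1))),
        K.g (K.Rm (K.e i) X K.ξ) (K.e i) =
          K.η (K.e i) * K.g X (K.e i) - K.η X * K.g (K.e i) (K.e i)
          + (2*(K.cc*K.η X) + X K.cc) * K.g (K.φ (K.e i)) (K.e i)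
          - 2*K.cc*(K.η (K.e i) * K.g (K.φ X) (K.e i))
          - K.g (K.φ X) (K.e i) * (K.e i) K.cc := by
      intro i _
      rw [K.Rm_xi]
      rw [K.g_sub_left, K.g_add_left, K.g_sub_left, K.g_smul_left, K.g_smul_left,
        K.g_smul_left, K.g_smul_left]
      ring
    rw [Finset.sum_congr rfl hper]
    simp only [Finset.sum_sub_distrib, Finset.sum_add_distrib, ← Finset.mul_sum]
  have hframe : (∑ i, K.g (K.e i) (K.e i)) = ((2*n+1 : ℕ) : C) := by
    rw [Finset.sum_congr rfl fun i _ => by rw [K.g_frame, if_pos rfl]]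
    simp
  have h4 : ∑ i, K.η (K.e i) * K.g (K.φ X) (K.e i) = K.η (K.φ X) := K.sum_eta_g _
  have h5 : ∑ i, K.g (K.φ X) (K.e i) * (K.e i) K.cc = 0 := by
    rw [K.sum_frame_apply (K.φ X) K.cc, K.phiX_cc]
  rw [hsum, K.sum_eta_g X, hframe, K.trace_phi, h4, h5]
  have hcast : ((2*n+1 : ℕ) : C) = ((2*n : ℕ) : C) + 1 := by push_cast; ring
  rw [hcast]
  linear_combination (2*K.η X) * K.cc_sq + K.cc_Xcc X - (2:C) * K.cc_tau X


lemma bracket_smul (a : C) (D X : Derivation ℝ C C) :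
    ⁅a • D, X⁆ = a • ⁅D, X⁆ - (X a) • D := by
  ext f
  simp [Derivation.commutator_apply, smul_eq_mul]
  ring

lemma lieG_axi (a : C) (X : Derivation ℝ C C) :
    K.lieG (a • K.ξ) X K.ξ = X a + K.ξ a * K.η X := by
  rw [lieG, bracket_smul, bracket_smul, lie_self, smul_zero, zero_sub,
    K.g_sub_left, K.g_smul_left, K.g_smul_left]
  rw [show K.g X (-(K.ξ a • K.ξ)) = -(K.ξ a * K.η X) by
    rw [show -(K.ξ a • K.ξ) = (-(K.ξ a)) • K.ξ by rw [neg_smul], K.g_smul_right, ← K.eta_def]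
    ring]
  rw [show K.g ⁅K.ξ, X⁆ K.ξ = K.η (K.nabla K.ξ X) by
    rw [← K.torsion_free, K.g_sub_left, ← K.eta_def, ← K.eta_def, K.eta_nabla_xi]
    ring]
  rw [show (a • K.ξ) (K.g X K.ξ) = a * K.η (K.nabla K.ξ X) by
    rw [Derivation.smul_apply, smul_eq_mul, K.metric_compat K.ξ X K.ξ, K.nabla_xi_xi,
      K.g_zero_right, ← K.eta_def]
    ring]
  rw [K.g_xi_xi]
  ring

end KenmotsuManifold

open KenmotsuManifold in
/-- If `V = aξ` (with `a` a smooth function) is the potential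
vector field of a `*`-Ricci soliton (with `λ = 0`) on a Kenmotsu manifold, so
that `(£_V g)(X,Y) = -2S(X,Y) - 2(2n-1)g(X,Y) - 2η(X)η(Y)`, then
`da(X) + da(ξ)η(X) = 0` for all `X`, and consequently `a` is constant. -/
theorem stmt11 {n : ℕ} {C : Type*} [CommRing C] [Algebra ℝ C]
    (K : KenmotsuManifold n C) (a : C)
    (h : ∀ X Y, K.lieG (a • K.ξ) X Y =
      -2 * K.S X Y - (2 * (2 * (n : ℝ) - 1)) • K.g X Y - 2 * (K.η X * K.η Y)) :
    (∀ X : Derivation ℝ C C, X a + K.ξ a * K.η X = 0) ∧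
      ∀ X : Derivation ℝ C C, X a = 0 := by

  have key : ∀ X : Derivation ℝ C C, X a + K.ξ a * K.η X = 0 := by
    intro X
    have hh := h X K.ξ
    rw [K.lieG_axi, K.S_xi, K.eta_xi, ← K.eta_def X, Algebra.smul_def] at hh
    have hsc : algebraMap ℝ C (2*(2*(n:ℝ)-1)) = 2*((2*n : ℕ) : C) - 2 := by
      rw [show (2*(2*(n:ℝ)-1)) = 2*((2*n:ℕ):ℝ) - 2 by push_cast; ring, map_sub, map_mul,
        map_natCast, map_ofNat]
    rw [hsc] at hh
    linear_combination hh
  refine ⟨key, ?_⟩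
  have hxi : K.ξ a = 0 := by
    have hk := key K.ξ
    rw [K.eta_xi] at hk
    exact half_cancel (by linear_combination hk)
  intro X
  have hk := key X
  rw [hxi] at hk
  linear_combination hk
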